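/- Let (Ω, 𝓕, μ) be a standard Borel probability space, X : Ω → 𝒳 measurable, T : Ω → {0, 1} ⊆ ℝ measurable (binary), and Y₁, Y₀ : Ω → ℝ square-integrable. Define the observed outcome Y = T·Y₁ + (1 − T)·Y₀. Assume unconfoundedness: (Y₁, Y₀) is conditionally independent of T given σ(X). Then μ[Y·(1 − T) | σ(X)] = (1 − μ[T | σ(X)]) · μ[Y₀ | σ(X)] μ-almost everywhere. -/

import Mathlib

/-! On `{T = 0}` the observed outcome is `Y₀` and `1 - T` vanishes elsewhere, so
`Y·(1 - T) = Y₀·(1 - T)`. Since `1 - T`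
is a function of `T`, unconfoundedness makes `Y₀` and `1 - T` conditionally independent given
`σ(X)`, and the conditional expectation of their product splits. That splitting is proved by
disintegrating `μ` along `σ(X)`: conditional independence means independence under almost every
measure of the conditional expectation kernel, where the expectation of a product of independent
variables is the product of the expectations. -/

open MeasureTheory ProbabilityTheory

namespace ProbabilityTheory

variable {Ω : Type*} {m mΩ : MeasurableSpace Ω} [StandardBorelSpace Ω] {hm : m ≤ mΩ}
  {μ : Measure Ω} [IsFiniteMeasure μ]

lemma ae_ae_eq_condExpKernel_of_ae_eq {β : Type*} (hm : m ≤ mΩ) {f f' : Ω → β}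
    (h : f =ᵐ[μ] f') : ∀ᵐ ω ∂μ.trim hm, f =ᵐ[condExpKernel μ m ω] f' := by
  rw [← condExpKernel_comp_trim (μ := μ) hm] at h
  exact Measure.ae_ae_of_ae_comp h

lemma CondIndepFun.congr {β β' : Type*} [MeasurableSpace β] [MeasurableSpace β']
    {f f' : Ω → β} {g g' : Ω → β'} (hfg : CondIndepFun m hm f g μ) (hf : f =ᵐ[μ] f')
    (hg : g =ᵐ[μ] g') : CondIndepFun m hm f' g' μ :=
  Kernel.IndepFun.congr' hfg (ae_ae_eq_condExpKernel_of_ae_eq hm hf)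
    (ae_ae_eq_condExpKernel_of_ae_eq hm hg)

lemma CondIndepFun.ae_indepFun_condExpKernel {β β' : Type*} [MeasurableSpace β]
    [MeasurableSpace β'] [MeasurableSpace.CountableOrCountablyGenerated Ω (β × β')] {f : Ω → β} {g : Ω → β'}
    (hfg : CondIndepFun m hm f g μ) (hf : Measurable f) (hg : Measurable g) :
    ∀ᵐ ω ∂μ.trim hm, IndepFun f g (condExpKernel μ m ω) := by
  filter_upwards [(condIndepFun_iff_map_prod_eq_prod_map_map hf hg).1 hfg] with ω hω
  rw [indepFun_iff_map_prod_eq_prod_map_map hf.aemeasurable hg.aemeasurable]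
  rwa [Kernel.prod_apply, Kernel.map_apply _ hf, Kernel.map_apply _ hg,
    Kernel.map_apply _ (hf.prodMk hg)] at hω

lemma CondIndepFun.condExp_mul_of_measurable {f g : Ω → ℝ} (hfg : CondIndepFun m hm f g μ)
    (hf : Measurable f) (hg : Measurable g) (hf_int : Integrable f μ) (hg_int : Integrable g μ)
    (hfg_int : Integrable (f * g) μ) :
    μ[f * g | m] =ᵐ[μ] μ[f | m] * μ[g | m] := by
  filter_upwards [condExp_ae_eq_integral_condExpKernel hm hfg_int,
    condExp_ae_eq_integral_condExpKernel hm hf_int, condExp_ae_eq_integral_condExpKernel hm hg_int,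
    ae_of_ae_trim hm (hfg.ae_indepFun_condExpKernel hf hg)] with ω hω_fg hω_f hω_g hω_indep
  rw [Pi.mul_apply, hω_fg, hω_f, hω_g]
  exact hω_indep.integral_mul_eq_mul_integral hf.aestronglyMeasurable hg.aestronglyMeasurable

lemma CondIndepFun.condExp_mul {f g : Ω → ℝ} (hfg : CondIndepFun m hm f g μ)
    (hf_int : Integrable f μ) (hg_int : Integrable g μ) (hfg_int : Integrable (f * g) μ) :
    μ[f * g | m] =ᵐ[μ] μ[f | m] * μ[g | m] := by
  obtain ⟨f', hf', hff'⟩ := hf_int.aemeasurable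
  obtain ⟨g', hg', hgg'⟩ := hg_int.aemeasurable
  have hprod : f * g =ᵐ[μ] f' * g' := hff'.mul hgg'
  calc μ[f * g | m] =ᵐ[μ] μ[f' * g' | m] := condExp_congr_ae hprod
    _ =ᵐ[μ] μ[f' | m] * μ[g' | m] :=
      (hfg.congr hff' hgg').condExp_mul_of_measurable hf' hg' (hf_int.congr hff')
        (hg_int.congr hgg') (hfg_int.congr hprod)
    _ =ᵐ[μ] μ[f | m] * μ[g | m] :=
      (condExp_congr_ae hff').symm.mul (condExp_congr_ae hgg').symm

end ProbabilityTheory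

theorem condexp_obs_mul_one_sub_treatment_eq_general
    {Ω 𝒳 : Type*} {mΩ : MeasurableSpace Ω} [StandardBorelSpace Ω] [MeasurableSpace 𝒳]
    (μ : Measure Ω) [IsProbabilityMeasure μ]
    (X : Ω → 𝒳) (hX : Measurable X)
    (T : Ω → ℝ) (hT : Measurable T) (hT_bin : ∀ ω, T ω = 0 ∨ T ω = 1)
    (Y₁ Y₀ : Ω → ℝ) (hY₀ : MemLp Y₀ 2 μ)
    (Y : Ω → ℝ) (hY : Y = fun ω => T ω * Y₁ ω + (1 - T ω) * Y₀ ω)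
    (h_unconf : CondIndepFun (MeasurableSpace.comap X inferInstance) hX.comap_le
      (fun ω => (Y₁ ω, Y₀ ω)) T μ) :
    μ[fun ω => Y ω * (1 - T ω) | MeasurableSpace.comap X inferInstance]
      =ᵐ[μ] fun ω => (1 - (μ[T | MeasurableSpace.comap X inferInstance]) ω)
        * (μ[Y₀ | MeasurableSpace.comap X inferInstance]) ω := by
  have hT_bdd : ∀ ω, ‖T ω‖ ≤ 1 := fun ω => by rcases hT_bin ω with h | h <;> simp [h]
  have h1T_bdd : ∀ ω, ‖1 - T ω‖ ≤ 1 := fun ω => by rcases hT_bin ω with h | h <;> simp [h]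
  have hT_int : Integrable T μ := .of_bound hT.aestronglyMeasurable 1 (.of_forall hT_bdd)
  have h1T_int : Integrable (fun ω => 1 - T ω) μ := (integrable_const 1).sub hT_int
  have hY₀_int : Integrable Y₀ μ := hY₀.integrable one_le_two
  have h_prod_int : Integrable (Y₀ * fun ω => 1 - T ω) μ :=
    hY₀_int.mul_bdd (by fun_prop) (.of_forall h1T_bdd)
  have h_obs : (fun ω => Y ω * (1 - T ω)) = Y₀ * fun ω => 1 - T ω := by
    funext ω
    rcases hT_bin ω with h | h <;> simp [hY, h]
  have h_indep : CondIndepFun _ hX.comap_le Y₀ (fun ω => 1 - T ω) μ :=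
    h_unconf.comp measurable_snd (measurable_const.sub measurable_id)
  have h_cond_one_sub : μ[fun ω => 1 - T ω | MeasurableSpace.comap X inferInstance]
      =ᵐ[μ] fun ω => 1 - (μ[T | MeasurableSpace.comap X inferInstance]) ω := by
    filter_upwards [condExp_sub (integrable_const 1) hT_int (MeasurableSpace.comap X inferInstance)]
      with ω hω
    rw [condExp_const hX.comap_le] at hω
    exact hω
  rw [h_obs]
  filter_upwards [h_indep.condExp_mul hY₀_int h1T_int h_prod_int, h_cond_one_sub]
    with ω hω hω_one_sub
  rw [hω, Pi.mul_apply, hω_one_sub, mul_comm]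

/-- Under unconfoundedness, the control-group regression function is identified from the
observed outcome `Y = T·Y₁ + (1 - T)·Y₀`:
`μ[Y·(1 - T) | σ(X)] = (1 - μ[T | σ(X)]) · μ[Y₀ | σ(X)]` a.e. -/
theorem condexp_obs_mul_one_sub_treatment_eq
    {Ω 𝒳 : Type*} {mΩ : MeasurableSpace Ω} [StandardBorelSpace Ω] [MeasurableSpace 𝒳]
    (μ : Measure Ω) [IsProbabilityMeasure μ]
    (X : Ω → 𝒳) (hX : Measurable X)
    (T : Ω → ℝ) (hT : Measurable T) (hT_bin : ∀ ω, T ω = 0 ∨ T ω = 1)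
    (Y₁ Y₀ : Ω → ℝ) (hY₁ : MemLp Y₁ 2 μ) (hY₀ : MemLp Y₀ 2 μ)
    (Y : Ω → ℝ) (hY : Y = fun ω => T ω * Y₁ ω + (1 - T ω) * Y₀ ω)
    (h_unconf : CondIndepFun (MeasurableSpace.comap X inferInstance) hX.comap_le
      (fun ω => (Y₁ ω, Y₀ ω)) T μ) :
    μ[fun ω => Y ω * (1 - T ω) | MeasurableSpace.comap X inferInstance]
      =ᵐ[μ] fun ω => (1 - (μ[T | MeasurableSpace.comap X inferInstance]) ω)
        * (μ[Y₀ | MeasurableSpace.comap X inferInstance]) ω :=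
  condexp_obs_mul_one_sub_treatment_eq_general (mΩ := mΩ) μ X hX T hT hT_bin Y₁ Y₀ hY₀ Y hY h_unconf
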